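/- Fix an integer n ≥ 2 and let d, d' ∈ D with ℓ_r(d') < ∞ for every r = 1, …, n−1. Then the concave-gradient inequality W(d) − W(d') ≤ Σ_{r=1}^{n−1} ℓ_r(d') · (d_r − d'_r) holds. -/
import Mathlib

open MeasureTheory Finset

/-- The function `a(z; d)` from the tournament model. -/
noncomputable def aFun (n : ℕ) (d : ℕ → ℝ) (z : ℝ) : ℝ :=
  ∑ r ∈ Finset.Icc 1 (n - 1),
    (r : ℝ) * ((n - 1).choose r : ℝ) * z ^ (n - r - 1) * (1 - z) ^ (r - 1) * d r

/-- The feasible set `D` of prize-differential vectors. -/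
def feasible (n : ℕ) (d : ℕ → ℝ) : Prop :=
  (∀ r ∈ Finset.Icc 1 (n - 1), 0 ≤ d r) ∧
    ∑ r ∈ Finset.Icc 1 (n - 1), (r : ℝ) * d r = 1

/-- The objective `W(d) = ∫₀¹ log a(z; d) dz`. -/
noncomputable def W (n : ℕ) (d : ℕ → ℝ) : ℝ :=
  ∫ z in (0:ℝ)..1, Real.log (aFun n d z)

/-- The integrand of the marginal incentive term `ℓ_r(d)`. -/
noncomputable def ellIntegrand (n : ℕ) (d : ℕ → ℝ) (r : ℕ) (z : ℝ) : ℝ :=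
  (r : ℝ) * ((n - 1).choose r : ℝ) * z ^ (n - r - 1) * (1 - z) ^ (r - 1) / aFun n d z

/-- The marginal incentive term `ℓ_r(d) = ∫₀¹ r C(n-1,r) z^{n-r-1}(1-z)^{r-1} / a(z; d) dz`. -/
noncomputable def ell (n : ℕ) (d : ℕ → ℝ) (r : ℕ) : ℝ :=
  ∫ z in (0:ℝ)..1, ellIntegrand n d r z

/- ## Auxiliary lemmas -/

lemma ae_ne_real (c : ℝ) : ∀ᵐ z ∂(volume : Measure ℝ), z ≠ c := by
  have h : {z : ℝ | ¬ z ≠ c} = {c} := by ext z; simp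
  rw [MeasureTheory.ae_iff, h]
  exact measure_singleton c

/-- `log` is interval integrable on `[0,1]`. -/
lemma intervalIntegrable_log01 : IntervalIntegrable Real.log volume 0 1 := by
  have hrpow : IntervalIntegrable (fun x : ℝ => 2 * x ^ (-(1/2) : ℝ)) volume 0 1 :=
    (intervalIntegral.intervalIntegrable_rpow' (by norm_num)).const_mul 2
  refine hrpow.mono_fun Real.measurable_log.aestronglyMeasurable.restrict ?_
  rw [Set.uIoc_of_le (by norm_num : (0:ℝ) ≤ 1)]
  filter_upwards [ae_restrict_mem measurableSet_Ioc] with x hx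
  have hx0 : 0 < x := hx.1
  have hx1 : x ≤ 1 := hx.2
  have hpow : 0 < x ^ (-(1/2) : ℝ) := Real.rpow_pos_of_pos hx0 _
  have h1 : Real.log (x ^ (-(1/2) : ℝ)) ≤ x ^ (-(1/2) : ℝ) - 1 :=
    Real.log_le_sub_one_of_pos hpow
  rw [Real.log_rpow hx0] at h1
  have hlog : Real.log x ≤ 0 := Real.log_nonpos (le_of_lt hx0) hx1
  simp only [Real.norm_eq_abs]
  rw [abs_of_nonpos hlog, abs_of_nonneg (by positivity : (0:ℝ) ≤ 2 * x ^ (-(1/2) : ℝ))]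
  nlinarith [hpow]

lemma intervalIntegrable_log_one_sub :
    IntervalIntegrable (fun z : ℝ => Real.log (1 - z)) volume 0 1 := by
  have := (intervalIntegrable_log01.comp_sub_left 1)
  simpa using this.symm

/-- Positivity of `aFun` on `(0,1)` for feasible `d`. -/
lemma aFun_pos (n : ℕ) (hn : 2 ≤ n) (d : ℕ → ℝ) (hd : feasible n d)
    {z : ℝ} (hz : z ∈ Set.Ioo (0:ℝ) 1) : 0 < aFun n d z := by
  obtain ⟨hpos, hsum⟩ := hd
  have hex : ∃ r ∈ Finset.Icc 1 (n - 1), 0 < d r := by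
    by_contra h
    push_neg at h
    have : ∑ r ∈ Finset.Icc 1 (n - 1), (r : ℝ) * d r = 0 := by
      refine Finset.sum_eq_zero fun r hr => ?_
      have : d r = 0 := le_antisymm (h r hr) (hpos r hr)
      simp [this]
    rw [this] at hsum; norm_num at hsum
  obtain ⟨r0, hr0, hd0⟩ := hex
  have hz0 : 0 < z := hz.1
  have hz1 : 0 < 1 - z := by linarith [hz.2]
  refine Finset.sum_pos' (fun r hr => ?_) ⟨r0, hr0, ?_⟩
  · have h1 : (1:ℕ) ≤ r := (Finset.mem_Icc.mp hr).1
    have := hpos r hr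
    positivity
  · have h1 : (1:ℕ) ≤ r0 := (Finset.mem_Icc.mp hr0).1
    have h2 : r0 ≤ n - 1 := (Finset.mem_Icc.mp hr0).2
    have hch : 0 < ((n-1).choose r0 : ℝ) := by
      exact_mod_cast Nat.choose_pos h2
    have hr0' : (0:ℝ) < (r0 : ℝ) := by exact_mod_cast h1
    positivity

lemma continuous_aFun (n : ℕ) (d : ℕ → ℝ) : Continuous (aFun n d) := by
  unfold aFun
  exact continuous_finset_sum _ fun r _ => by fun_prop

/-- `log ∘ aFun` is interval integrable on `[0,1]` for feasible `d`. -/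
lemma intervalIntegrable_log_aFun (n : ℕ) (hn : 2 ≤ n) (d : ℕ → ℝ) (hd : feasible n d) :
    IntervalIntegrable (fun z => Real.log (aFun n d z)) volume 0 1 := by
  obtain ⟨hpos, hsum⟩ := hd
  have hex : ∃ r ∈ Finset.Icc 1 (n - 1), 0 < d r := by
    by_contra h
    push_neg at h
    have : ∑ r ∈ Finset.Icc 1 (n - 1), (r : ℝ) * d r = 0 := by
      refine Finset.sum_eq_zero fun r hr => ?_
      have : d r = 0 := le_antisymm (h r hr) (hpos r hr)
      simp [this]
    rw [this] at hsum; norm_num at hsum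
  obtain ⟨r0, hr0, hd0⟩ := hex
  set C : ℝ := (r0 : ℝ) * ((n-1).choose r0 : ℝ) with hC
  have h1 : (1:ℕ) ≤ r0 := (Finset.mem_Icc.mp hr0).1
  have h2 : r0 ≤ n - 1 := (Finset.mem_Icc.mp hr0).2
  have hch : 0 < ((n-1).choose r0 : ℝ) := by exact_mod_cast Nat.choose_pos h2
  have hr0' : (0:ℝ) < (r0 : ℝ) := by exact_mod_cast h1
  have hCpos : 0 < C := by positivity
  set k : ℕ := n - r0 - 1
  set m : ℕ := r0 - 1
  -- the dominating function
  set G : ℝ → ℝ := fun z => |aFun n d z - 1| + |Real.log (d r0 * C)|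
      + (k : ℝ) * |Real.log z| + (m : ℝ) * |Real.log (1 - z)| with hG
  have hGint : IntervalIntegrable G volume 0 1 := by
    refine (((((continuous_aFun n d).sub continuous_const).abs.intervalIntegrable 0 1).add
      (intervalIntegrable_const)).add
      ((intervalIntegrable_log01.abs.const_mul _))).add
      ((intervalIntegrable_log_one_sub.abs.const_mul _))
  refine hGint.mono_fun' ?_ ?_
  · exact (Real.measurable_log.comp (continuous_aFun n d).measurable).aestronglyMeasurable.restrict
  · rw [Set.uIoc_of_le (by norm_num : (0:ℝ) ≤ 1)]
    filter_upwards [ae_restrict_mem measurableSet_Ioc, ae_restrict_of_ae (ae_ne_real 1)]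
      with z hz hz1
    have hzIoo : z ∈ Set.Ioo (0:ℝ) 1 := ⟨hz.1, lt_of_le_of_ne hz.2 hz1⟩
    have hz0 : 0 < z := hzIoo.1
    have hz1' : 0 < 1 - z := by linarith [hzIoo.2]
    have hA : 0 < aFun n d z := aFun_pos n hn d ⟨hpos, hsum⟩ hzIoo
    set A := aFun n d z with hAdef
    -- lower bound on A
    have hterm : d r0 * C * z ^ k * (1 - z) ^ m ≤ A := by
      have := Finset.single_le_sum
        (f := fun r : ℕ => (r : ℝ) * ((n - 1).choose r : ℝ) * z ^ (n - r - 1) *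
          (1 - z) ^ (r - 1) * d r)
        (fun r hr => by
          have h1 : (1:ℕ) ≤ r := (Finset.mem_Icc.mp hr).1
          have := hpos r hr
          positivity) hr0
      calc d r0 * C * z ^ k * (1 - z) ^ m
          = (r0 : ℝ) * ((n - 1).choose r0 : ℝ) * z ^ (n - r0 - 1) *
            (1 - z) ^ (r0 - 1) * d r0 := by rw [hC]; ring
        _ ≤ A := this
    have hB : 0 < d r0 * C * z ^ k * (1 - z) ^ m := by positivity
    have hlogB : Real.log (d r0 * C * z ^ k * (1 - z) ^ m)
        = Real.log (d r0 * C) + (k : ℝ) * Real.log z + (m : ℝ) * Real.log (1 - z) := by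
      rw [Real.log_mul (by positivity) (by positivity),
        Real.log_mul (by positivity) (by positivity), Real.log_pow, Real.log_pow]
    have hlow : Real.log (d r0 * C) + (k : ℝ) * Real.log z + (m : ℝ) * Real.log (1 - z)
        ≤ Real.log A := by
      rw [← hlogB]
      exact Real.log_le_log hB hterm
    have hup : Real.log A ≤ A - 1 := Real.log_le_sub_one_of_pos hA
    simp only [Real.norm_eq_abs, hG]
    rw [abs_le]
    constructor
    · have b1 : -|Real.log (d r0 * C)| ≤ Real.log (d r0 * C) := neg_abs_le _
      have b2 : -((k:ℝ) * |Real.log z|) ≤ (k:ℝ) * Real.log z := by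
        have := neg_abs_le (Real.log z); nlinarith [Nat.cast_nonneg (α := ℝ) k]
      have b3 : -((m:ℝ) * |Real.log (1 - z)|) ≤ (m:ℝ) * Real.log (1 - z) := by
        have := neg_abs_le (Real.log (1 - z)); nlinarith [Nat.cast_nonneg (α := ℝ) m]
      have habs : (0:ℝ) ≤ |A - 1| := abs_nonneg _
      linarith
    · have : A - 1 ≤ |A - 1| := le_abs_self _
      have h2' : (0:ℝ) ≤ |Real.log (d r0 * C)| := abs_nonneg _
      have h3' : (0:ℝ) ≤ (k:ℝ) * |Real.log z| := by positivity
      have h4' : (0:ℝ) ≤ (m:ℝ) * |Real.log (1 - z)| := by positivity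
      linarith

set_option maxHeartbeats 1000000 in
/-- If `d, d' ∈ D` and `ℓ_r(d') < ∞` (i.e., the corresponding integrand
is integrable) for every `r = 1, …, n−1`, then the concave-gradient inequality
`W(d) − W(d') ≤ Σ_r ℓ_r(d') (d_r − d'_r)` holds. -/
theorem concave_gradient_inequality (n : ℕ) (hn : 2 ≤ n) (d d' : ℕ → ℝ)
    (hd : feasible n d) (hd' : feasible n d')
    (hfin : ∀ r ∈ Finset.Icc 1 (n - 1),
      IntervalIntegrable (ellIntegrand n d' r) volume 0 1) :
    W n d - W n d' ≤ ∑ r ∈ Finset.Icc 1 (n - 1), ell n d' r * (d r - d' r) := by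
  have hI1 : IntervalIntegrable (fun z => Real.log (aFun n d z)) volume 0 1 :=
    intervalIntegrable_log_aFun n hn d hd
  have hI2 : IntervalIntegrable (fun z => Real.log (aFun n d' z)) volume 0 1 :=
    intervalIntegrable_log_aFun n hn d' hd'
  have hIg : ∀ r ∈ Finset.Icc 1 (n - 1),
      IntervalIntegrable (fun z => ellIntegrand n d' r z * (d r - d' r)) volume 0 1 :=
    fun r hr => (hfin r hr).mul_const _
  have hIgsum : IntervalIntegrable
      (fun z => ∑ r ∈ Finset.Icc 1 (n - 1), ellIntegrand n d' r z * (d r - d' r)) volume 0 1 := by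
    have h := IntervalIntegrable.sum (μ := volume) (a := 0) (b := 1) (Finset.Icc 1 (n - 1))
      (f := fun r => fun z => ellIntegrand n d' r z * (d r - d' r)) hIg
    simpa [Finset.sum_fn] using h
  have key : W n d - W n d'
      ≤ ∫ z in (0:ℝ)..1, ∑ r ∈ Finset.Icc 1 (n - 1), ellIntegrand n d' r z * (d r - d' r) := by
    rw [W, W, ← intervalIntegral.integral_sub hI1 hI2]
    refine intervalIntegral.integral_mono_ae_restrict zero_le_one (hI1.sub hI2) hIgsum ?_
    filter_upwards [ae_restrict_mem measurableSet_Icc, ae_restrict_of_ae (ae_ne_real 0),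
      ae_restrict_of_ae (ae_ne_real 1)] with z hz hz0 hz1
    have hzIoo : z ∈ Set.Ioo (0:ℝ) 1 :=
      ⟨lt_of_le_of_ne hz.1 (Ne.symm hz0), lt_of_le_of_ne hz.2 hz1⟩
    have hA : 0 < aFun n d z := aFun_pos n hn d hd hzIoo
    have hB : 0 < aFun n d' z := aFun_pos n hn d' hd' hzIoo
    set A := aFun n d z
    set B := aFun n d' z
    have hrhs : ∑ r ∈ Finset.Icc 1 (n - 1), ellIntegrand n d' r z * (d r - d' r)
        = (A - B) / B := by
      simp only [ellIntegrand, div_mul_eq_mul_div, ← Finset.sum_div]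
      congr 1
      have : ∑ r ∈ Finset.Icc 1 (n - 1),
          (r : ℝ) * ((n - 1).choose r : ℝ) * z ^ (n - r - 1) * (1 - z) ^ (r - 1) * (d r - d' r)
          = A - B := by
        simp only [mul_sub]
        rw [Finset.sum_sub_distrib]
        rfl
      exact this
    rw [hrhs]
    have hdiv : Real.log A - Real.log B = Real.log (A / B) :=
      (Real.log_div (ne_of_gt hA) (ne_of_gt hB)).symm
    have hle : Real.log (A / B) ≤ A / B - 1 :=
      Real.log_le_sub_one_of_pos (by positivity)
    have : A / B - 1 = (A - B) / B := by field_simp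
    simp only [hdiv]
    linarith [hle, this ▸ hle]
  calc W n d - W n d'
      ≤ ∫ z in (0:ℝ)..1, ∑ r ∈ Finset.Icc 1 (n - 1),
          ellIntegrand n d' r z * (d r - d' r) := key
    _ = ∑ r ∈ Finset.Icc 1 (n - 1), ell n d' r * (d r - d' r) := by
        rw [intervalIntegral.integral_finset_sum hIg]
        refine Finset.sum_congr rfl fun r hr => ?_
        rw [intervalIntegral.integral_mul_const, ell]
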